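/- arXiv:0904.3433 — 2 statements merged into one kernel-verified Lean document; each statement's English description precedes it below -/
import Mathlib

section
/- Let {a_{i,j}}_{i∈[s], j∈[2]} be natural numbers with total sum at most t and with a_{i,1} + a_{i,2} ≤ S for all i ∈ [s], and let M be a nonempty matching with vertex set V(M). Then there is a mapping φ: [s]×[2] → V(M) such that for all i ∈ [s] the pair {φ(i,1), φ(i,2)} is an edge of M, and for every v ∈ V(M) the sum of a_{i,j} over all (i,j) with φ(i,j) = v is at most t/(2|M|) + 2S. -/
open SimpleGraph

/-- Vertex set of the complete tripartite graph `K_{n,n,n}`. -/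
abbrev TriV (n : ℕ) := (Σ _ : Fin 3, Fin n)

/-- The complete tripartite graph `K_{n,n,n}`. -/
def triK (n : ℕ) : SimpleGraph (TriV n) := completeMultipartiteGraph (fun _ : Fin 3 => Fin n)

/-- The spanning subgraph of a coloured graph formed by the edges of colour `c`. -/
def colSub {V : Type} (G : SimpleGraph V) (col : Sym2 V → Bool) (c : Bool) : SimpleGraph V where
  Adj u v := G.Adj u v ∧ col s(u, v) = c
  symm := by
    constructor
    intro u v h
    refine ⟨h.1.symm, ?_⟩
    rw [Sym2.eq_swap]
    exact h.2
  loopless := ⟨fun v h => G.loopless.irrefl v h.1⟩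

/-- The class `𝒦ηₙ` of spanning subgraphs of `K_{n,n,n}` with minimum degree `> (2-η)n`. -/
def KK (n : ℕ) (η : ℝ) (K : SimpleGraph (TriV n)) : Prop :=
  K ≤ triK n ∧ ∀ v : TriV n, (2 - η) * n < (({u | K.Adj v u} : Set (TriV n)).ncard : ℝ)

/-- `M` is a matching in the graph `G`: a set of pairwise vertex-disjoint edges of `G`. -/
def IsMatching' {V : Type} (G : SimpleGraph V) (M : Finset (Sym2 V)) : Prop :=
  (∀ e ∈ M, e ∈ G.edgeSet) ∧
    ∀ e ∈ M, ∀ f ∈ M, e ≠ f → ∀ v : V, v ∈ e → v ∉ f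

/-- `v` is covered by the matching `M`. -/
def MCovers {V : Type} (M : Finset (Sym2 V)) (v : V) : Prop := ∃ e ∈ M, v ∈ e

/-- The matching `M` is connected in `G`: all covered vertices lie in one component of `G`. -/
def MatchConnected {V : Type} (G : SimpleGraph V) (M : Finset (Sym2 V)) : Prop :=
  ∀ u v : V, MCovers M u → MCovers M v → G.Reachable u v

/-- The matching `M` is odd: the component of `G` containing it has an odd cycle. -/
def MatchOdd {V : Type} (G : SimpleGraph V) (M : Finset (Sym2 V)) : Prop :=
  ∃ (u : V) (p : G.Walk u u), p.IsCycle ∧ Odd p.length ∧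
    ∃ v : V, MCovers M v ∧ G.Reachable u v

/-- A coloured graph is `m`-odd if some colour contains an odd connected matching of
size at least `m`. -/
def mOdd (n : ℕ) (K : SimpleGraph (TriV n)) (col : Sym2 (TriV n) → Bool) (m : ℝ) : Prop :=
  ∃ (c : Bool) (M : Finset (Sym2 (TriV n))),
    IsMatching' (colSub K col c) M ∧ MatchConnected (colSub K col c) M ∧
      MatchOdd (colSub K col c) M ∧ m ≤ (M.card : ℝ)

/-- A fork system of ratio at most `r` in `G`: each element is a fork given by its center
and its (nonempty) set of at most `r` prongs; the forks are pairwise vertex-disjoint. -/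
def IsForkSystem {V : Type} (G : SimpleGraph V) (r : ℕ) (F : Finset (V × Finset V)) : Prop :=
  (∀ p ∈ F, p.2.Nonempty ∧ p.1 ∉ p.2 ∧ p.2.card ≤ r ∧ ∀ v ∈ p.2, G.Adj p.1 v) ∧
    ∀ p ∈ F, ∀ q ∈ F, p ≠ q → ∀ v : V, (v = p.1 ∨ v ∈ p.2) → ¬(v = q.1 ∨ v ∈ q.2)

/-- `v` is covered by the fork system `F`. -/
def FCovers {V : Type} (F : Finset (V × Finset V)) (v : V) : Prop :=
  ∃ p ∈ F, v = p.1 ∨ v ∈ p.2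

/-- The fork system `F` is connected in `G`. -/
def ForkConnected {V : Type} (G : SimpleGraph V) (F : Finset (V × Finset V)) : Prop :=
  ∀ u v : V, FCovers F u → FCovers F v → G.Reachable u v

/-- The size of a fork system: the total number of prongs. -/
def forkSize {V : Type} (F : Finset (V × Finset V)) : ℕ := ∑ p ∈ F, p.2.card

/-- A coloured graph is `(m,f,r)`-good if some colour contains a connected matching of size
at least `m` and a connected fork system of ratio at most `r` and size at least `f`. -/
def Good (n : ℕ) (K : SimpleGraph (TriV n)) (col : Sym2 (TriV n) → Bool)
    (m f : ℝ) (r : ℕ) : Prop :=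
  ∃ c : Bool,
    (∃ M, IsMatching' (colSub K col c) M ∧ MatchConnected (colSub K col c) M ∧
      m ≤ (M.card : ℝ)) ∧
    (∃ F, IsForkSystem (colSub K col c) r F ∧ ForkConnected (colSub K col c) F ∧
      f ≤ (forkSize F : ℝ))

/-- `K[D,D']` is `η`-complete w.r.t. `n`: every vertex of either side has at most `ηn`
non-neighbours on the other side. -/
def EtaComplete {V : Type} (K : SimpleGraph V) (n : ℕ) (η : ℝ) (D D' : Finset V) : Prop :=
  (∀ v ∈ D, (({u | u ∈ D' ∧ ¬K.Adj v u} : Set V).ncard : ℝ) ≤ η * n) ∧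
  (∀ v ∈ D', (({u | u ∈ D ∧ ¬K.Adj u v} : Set V).ncard : ℝ) ≤ η * n)

/-- `K[D,D']` is `(η,c)`-complete: `η`-complete and all its edges have colour `c`. -/
def EtaCComplete {V : Type} (K : SimpleGraph V) (col : Sym2 V → Bool) (n : ℕ) (η : ℝ)
    (c : Bool) (D D' : Finset V) : Prop :=
  EtaComplete K n η D D' ∧ ∀ u ∈ D, ∀ v ∈ D', K.Adj u v → col s(u, v) = c

/-- Pyramid configuration with parameter `η` (Definition (E1)). -/
def PyramidConfig (n : ℕ) (K : SimpleGraph (TriV n)) (col : Sym2 (TriV n) → Bool)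
    (η : ℝ) : Prop :=
  ∃ (c c' : Bool) (D1 D2 D1' D2' : Finset (TriV n)),
    Disjoint D1 D2 ∧ Disjoint D1 D1' ∧ Disjoint D1 D2' ∧ Disjoint D2 D1' ∧
      Disjoint D2 D2' ∧ Disjoint D1' D2' ∧
    D1.card ≤ n ∧ D2.card ≤ n ∧ D1'.card ≤ n ∧ D2'.card ≤ n ∧
    (1 - η) * n ≤ (D1.card : ℝ) ∧ (1 - η) * n ≤ (D2.card : ℝ) ∧
    (1 - η) * n ≤ (D1'.card : ℝ) + (D2'.card : ℝ) ∧
    (D1' = ∅ ∨ 2 * η * n ≤ (D1'.card : ℝ)) ∧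
    (D2' = ∅ ∨ 2 * η * n ≤ (D2'.card : ℝ)) ∧
    EtaCComplete K col n η c D1 D1' ∧ EtaCComplete K col n η c D2 D2' ∧
    EtaComplete K n η D1 D2' ∧ EtaComplete K n η D2 D1' ∧ EtaComplete K n η D1 D2 ∧
    (EtaCComplete K col n η c' D1 D2 ∨
      (EtaCComplete K col n η c' D1 D2' ∧ EtaCComplete K col n η c' D1' D2))

/-- Crossing relation of the six bipartite graphs in the spider configuration. -/
def spiderCross {V : Type} (A1 A2 B1 B2 C1 C2 : Finset V) (u v : V) : Prop :=
  (u ∈ A1 ∧ (v ∈ B2 ∨ v ∈ C2)) ∨ (u ∈ B1 ∧ (v ∈ A2 ∨ v ∈ C2)) ∨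
    (u ∈ C1 ∧ (v ∈ A2 ∨ v ∈ B2))

/-- The union of the six bipartite graphs in the spider configuration, as a graph. -/
def spiderGraph {V : Type} (K : SimpleGraph V) (A1 A2 B1 B2 C1 C2 : Finset V) :
    SimpleGraph V where
  Adj u v := K.Adj u v ∧
    (spiderCross A1 A2 B1 B2 C1 C2 u v ∨ spiderCross A1 A2 B1 B2 C1 C2 v u)
  symm := by
    constructor
    intro u v h
    exact ⟨h.1.symm, h.2.symm⟩
  loopless := ⟨fun v h => K.loopless.irrefl v h.1⟩

/-- Spider configuration with parameter `η` (Definition (E2)). -/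
def SpiderConfig (n : ℕ) (K : SimpleGraph (TriV n)) (col : Sym2 (TriV n) → Bool)
    (η : ℝ) : Prop :=
  ∃ (c : Bool) (A1 A2 B1 B2 C1 C2 : Finset (TriV n)),
    List.Pairwise Disjoint [A1, A2, B1, B2, C1, C2] ∧
    (1 - η) * n ≤ ((A1 ∪ A2).card : ℝ) ∧ (1 - η) * n ≤ ((B1 ∪ B2).card : ℝ) ∧
      (1 - η) * n ≤ ((C1 ∪ C2).card : ℝ) ∧
    EtaCComplete K col n η c A1 B2 ∧ EtaCComplete K col n η c A1 C2 ∧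
    EtaCComplete K col n η c B1 A2 ∧ EtaCComplete K col n η c B1 C2 ∧
    EtaCComplete K col n η c C1 A2 ∧ EtaCComplete K col n η c C1 B2 ∧
    (∀ u ∈ A1 ∪ B1 ∪ C1 ∪ A2 ∪ B2 ∪ C2, ∀ v ∈ A1 ∪ B1 ∪ C1 ∪ A2 ∪ B2 ∪ C2,
      (spiderGraph K A1 A2 B1 B2 C1 C2).Reachable u v) ∧
    ∃ AB AC BA BC CA CB CC : Finset (TriV n),
      A2 = AB ∪ AC ∧ Disjoint AB AC ∧
      B2 = BA ∪ BC ∧ Disjoint BA BC ∧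
      C2 = CA ∪ CB ∪ CC ∧ Disjoint CA CB ∧ Disjoint CA CC ∧ Disjoint CB CC ∧
      (AB = ∅ ∨ 2 * η * n ≤ (AB.card : ℝ)) ∧ (AC = ∅ ∨ 2 * η * n ≤ (AC.card : ℝ)) ∧
      (BA = ∅ ∨ 2 * η * n ≤ (BA.card : ℝ)) ∧ (BC = ∅ ∨ 2 * η * n ≤ (BC.card : ℝ)) ∧
      (CA = ∅ ∨ 2 * η * n ≤ (CA.card : ℝ)) ∧ (CB = ∅ ∨ 2 * η * n ≤ (CB.card : ℝ)) ∧
      (CC = ∅ ∨ 2 * η * n ≤ (CC.card : ℝ)) ∧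
      B1.card ≤ A1.card ∧ (C1 ∪ CC).card ≤ B1.card ∧
      AB.card = BA.card ∧ (AB.card : ℝ) ≤ n - (C2.card : ℝ) ∧
      AC.card = CA.card ∧ (AC.card : ℝ) ≤ n - (B2.card : ℝ) ∧
      BC.card = CB.card ∧ (BC.card : ℝ) ≤ n - (A2.card : ℝ) ∧
      (CC = ∅ ∨ AB = ∅) ∧
      (A2 = ∅ ∨ ((A2 ∪ B2 ∪ CA ∪ CB).card : ℝ) ≤ (1 - η) * (3 / 2) * n) ∧
      (C1 = ∅ ∨ ((A1 ∪ B1 ∪ C1).card : ℝ) < (1 - η) * (3 / 2) * n ∨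
        ((B1 ∪ C1).card : ℝ) ≤ (1 - η) * (3 / 4) * n)

/-- A coloured graph is `η`-extremal if it is in pyramid or spider configuration. -/
def Extremal (n : ℕ) (K : SimpleGraph (TriV n)) (col : Sym2 (TriV n) → Bool)
    (η : ℝ) : Prop :=
  PyramidConfig n K col η ∨ SpiderConfig n K col η

/-- The density of the pair of vertex sets `(U,W)` in `G`. -/
noncomputable def density {V : Type} (G : SimpleGraph V) (U W : Finset V) : ℝ :=
  (({p : V × V | p.1 ∈ U ∧ p.2 ∈ W ∧ G.Adj p.1 p.2} : Set (V × V)).ncard : ℝ) /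
    ((U.card : ℝ) * (W.card : ℝ))

/-- `(U,W)` is an `(ε,d)`-regular pair in `G`. -/
def IsRegularPair {V : Type} (G : SimpleGraph V) (ε d : ℝ) (U W : Finset V) : Prop :=
  d ≤ density G U W ∧
    ∀ U' ⊆ U, ∀ W' ⊆ W, ε * U.card ≤ (U'.card : ℝ) → ε * W.card ≤ (W'.card : ℝ) →
      |density G U' W' - density G U W| ≤ ε

/-- `𝔾` is an `(ε,d)`-reduced graph of `G` with partition `V₀ ∪ V₁ ∪ ... ∪ V_k`
given by the bin set `V0` and the clusters `P i`. -/
def IsReducedGraph {V : Type} [Fintype V] (G : SimpleGraph V) (ε d : ℝ) (k : ℕ)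
    (GG : SimpleGraph (Fin k)) (V0 : Finset V) (P : Fin k → Finset V) : Prop :=
  (∀ i, Disjoint V0 (P i)) ∧ (∀ i j, i ≠ j → Disjoint (P i) (P j)) ∧
    (∀ v : V, v ∈ V0 ∨ ∃ i, v ∈ P i) ∧
    ((V0.card : ℝ) ≤ ε * Fintype.card V) ∧
    (∀ i j, (P i).card = (P j).card) ∧
    (∀ i j, GG.Adj i j → IsRegularPair G ε d (P i) (P j))

/-- The graph obtained from `G` by deleting the vertices in `C` (the deleted vertices
remain as isolated vertices). -/
def delVerts {V : Type} (G : SimpleGraph V) (C : Finset V) : SimpleGraph V where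
  Adj u v := G.Adj u v ∧ u ∉ C ∧ v ∉ C
  symm := by
    constructor
    intro u v h
    exact ⟨h.1.symm, h.2.2, h.2.1⟩
  loopless := ⟨fun v h => G.loopless.irrefl v h.1⟩

/-- `C` is an `S`-cut of `T`: every component of `T - C` has at most `S` vertices. -/
def IsCut {V : Type} (T : SimpleGraph V) (S : ℝ) (C : Finset V) : Prop :=
  ∀ v : V, v ∉ C →
    ((({u | (delVerts T C).Reachable u v} : Set V).ncard : ℝ)) ≤ S

/-- `h` is a `(ρ,L)`-valid assignment of `T` to `GG`. -/
def ValidAssignment {V W : Type} (T : SimpleGraph V) (GG : SimpleGraph W)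
    (ρ L : ℝ) (h : V → W) : Prop :=
  (∀ u v : V, T.Adj u v → GG.Adj (h u) (h v)) ∧
  (∀ x : V, ({i | ∃ y : V, T.Adj x y ∧ h y = i} : Set W).ncard ≤ 2) ∧
  (∀ i : W, (({x : V | h x = i} : Set V).ncard : ℝ) < (1 - ρ) * L)

/-- The bipartite graph `K[D,D']` formed by the edges of `K` between `D` and `D'`. -/
def bipBetween {V : Type} (K : SimpleGraph V) (D D' : Finset V) : SimpleGraph V where
  Adj u v := K.Adj u v ∧ ((u ∈ D ∧ v ∈ D') ∨ (u ∈ D' ∧ v ∈ D))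
  symm := by
    constructor
    intro u v h
    refine ⟨h.1.symm, ?_⟩
    rcases h.2 with ⟨hu, hv⟩ | ⟨hu, hv⟩
    · exact Or.inr ⟨hv, hu⟩
    · exact Or.inl ⟨hv, hu⟩
  loopless := ⟨fun v h => K.loopless.irrefl v h.1⟩

/-!
Spread the rows over the edges of `M` greedily, always adding the next row to the edge of least
current load: an edge's load only exceeds the average `t / |M|` by the last row put on it, so by
at most `S`. On each edge, orient the rows one by one so that the heavier entry of a row goes to
the currently lighter endpoint; the two endpoints then never differ by more than `S`, so each
receives at most half of (edge load + `S`), i.e. at most `t / (2|M|) + S`.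
-/

open Finset Function

theorem exists_balanced_assignment {ι κ : Type*} [DecidableEq ι] [DecidableEq κ] (S : ℕ)
    (b : ι → ℕ) (P : Finset ι) (hb : ∀ i ∈ P, b i ≤ S) (B : Finset κ) (hB : B.Nonempty) :
    ∃ f : ι → κ, (∀ i ∈ P, f i ∈ B) ∧
      ∀ r ∈ B, #B * ∑ i ∈ P with f i = r, b i ≤ ∑ i ∈ P, b i + #B * S := by
  induction P using Finset.induction_on with
  | empty => exact ⟨fun _ => hB.choose, by simp, by simp⟩
  | @insert i P hi ih =>
    obtain ⟨f, hfB, hf⟩ := ih fun j hj => hb j (mem_insert_of_mem hj)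
    obtain ⟨r₀, hr₀, hmin⟩ := B.exists_min_image (fun r => ∑ j ∈ P with f j = r, b j) hB
    have hr₀_avg : #B * ∑ j ∈ P with f j = r₀, b j ≤ ∑ j ∈ P, b j :=
      calc #B * ∑ j ∈ P with f j = r₀, b j
          = #B • ∑ j ∈ P with f j = r₀, b j := (smul_eq_mul _ _).symm
        _ ≤ ∑ r ∈ B, ∑ j ∈ P with f j = r, b j := card_nsmul_le_sum _ _ _ hmin
        _ = ∑ j ∈ P, b j := sum_fiberwise_of_maps_to hfB _
    have hload : ∀ r, ∑ j ∈ insert i P with update f i r₀ j = r, b j =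
        (if r₀ = r then b i else 0) + ∑ j ∈ P with f j = r, b j := by
      intro r
      rw [sum_filter, sum_filter, sum_insert hi, update_self]
      congr 1
      exact sum_congr rfl fun j hj => by rw [update_of_ne (ne_of_mem_of_not_mem hj hi)]
    refine ⟨update f i r₀, fun j hj => ?_, fun r hr => ?_⟩
    · rcases mem_insert.mp hj with rfl | hj
      · simpa using hr₀
      · rw [update_of_ne (ne_of_mem_of_not_mem hj hi)]
        exact hfB j hj
    · rw [hload, sum_insert hi, mul_add]
      split_ifs with h
      · subst h
        have := Nat.mul_le_mul_left #B (hb i (mem_insert_self i P))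
        omega
      · have := hf r hr
        omega

theorem exists_orientation_sum_le_sum_add {ι : Type*} [DecidableEq ι] (S : ℕ)
    (a : ι → Fin 2 → ℕ) (P : Finset ι) (ha : ∀ i ∈ P, a i 0 + a i 1 ≤ S) :
    ∃ o : ι → Fin 2, ∀ k k' : Fin 2, ∑ i ∈ P, a i (k + o i) ≤ ∑ i ∈ P, a i (k' + o i) + S := by
  induction P using Finset.induction_on with
  | empty => exact ⟨fun _ => 0, by simp⟩
  | @insert i P hi ih =>
    obtain ⟨o, ho⟩ := ih fun j hj => ha j (mem_insert_of_mem hj)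
    set A : Fin 2 → ℕ := fun k => ∑ j ∈ P, a j (k + o j)
    obtain ⟨c, hc⟩ : ∃ c : Fin 2, ∀ k k', A k + a i (k + c) ≤ A k' + a i (k' + c) + S := by
      have h01 : A 0 ≤ A 1 + S := ho 0 1
      have h10 : A 1 ≤ A 0 + S := ho 1 0
      have hai := ha i (mem_insert_self i P)
      by_cases h : A 0 + a i 0 ≤ A 1 + a i 1 + S ∧ A 1 + a i 1 ≤ A 0 + a i 0 + S
      · refine ⟨0, fun k k' => ?_⟩
        fin_cases k <;> fin_cases k' <;> simp <;> omega
      · refine ⟨1, fun k k' => ?_⟩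
        fin_cases k <;> fin_cases k' <;> simp <;> omega
    have hsum : ∀ k, ∑ j ∈ insert i P, a j (k + update o i c j) = a i (k + c) + A k := by
      intro k
      rw [sum_insert hi, update_self]
      congr 1
      exact sum_congr rfl fun j hj => by rw [update_of_ne (ne_of_mem_of_not_mem hj hi)]
    exact ⟨update o i c, fun k k' => by rw [hsum, hsum]; linarith [hc k k']⟩

theorem exists_orientation_two_mul_sum_le {ι : Type*} [DecidableEq ι] (S : ℕ)
    (a : ι → Fin 2 → ℕ) (P : Finset ι) (ha : ∀ i ∈ P, a i 0 + a i 1 ≤ S) :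
    ∃ o : ι → Fin 2, ∀ k, 2 * ∑ i ∈ P, a i (k + o i) ≤ ∑ i ∈ P, (a i 0 + a i 1) + S := by
  obtain ⟨o, ho⟩ := exists_orientation_sum_le_sum_add S a P ha
  refine ⟨o, fun k => ?_⟩
  have hsplit : ∑ i ∈ P, a i (k + o i) + ∑ i ∈ P, a i (k + 1 + o i) =
      ∑ i ∈ P, (a i 0 + a i 1) := by
    rw [← sum_add_distrib]
    refine sum_congr rfl fun i _ => ?_
    generalize o i = c
    fin_cases k <;> fin_cases c <;> simp [add_comm]
  have := ho k (k + 1)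
  omega

theorem Sym2.exists_fin_two_eq {V : Type*} (e : Sym2 V) : ∃ p : Fin 2 → V, s(p 0, p 1) = e :=
  e.ind fun x y => ⟨![x, y], rfl⟩

theorem Sym2.mem_iff_exists_fin_two {V : Type*} {p : Fin 2 → V} {e : Sym2 V}
    (hp : s(p 0, p 1) = e) {v : V} : v ∈ e ↔ ∃ k, p k = v := by
  subst hp
  simp [Fin.exists_fin_two, eq_comm]

theorem Sym2.injective_of_mk_eq_of_not_isDiag {V : Type*} {p : Fin 2 → V} {e : Sym2 V}
    (hp : s(p 0, p 1) = e) (he : ¬ e.IsDiag) : Injective p := by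
  subst hp
  intro x y hxy
  fin_cases x <;> fin_cases y <;> simp_all

theorem Sym2.mk_apply_sub_fin_two {V : Type*} (p : Fin 2 → V) (c : Fin 2) :
    s(p (0 - c), p (1 - c)) = s(p 0, p 1) := by
  fin_cases c
  · rfl
  · exact Sym2.eq_swap

theorem sum_ite_apply_sub_eq {G V M : Type*} [AddGroup G] [Fintype G] [DecidableEq V]
    [AddCommMonoid M] {p : G → V} (hp : Injective p) (w : G → M) (c k : G) :
    ∑ j, (if p (j - c) = p k then w j else 0) = w (k + c) := by
  classical
  simp [hp.eq_iff, sub_eq_iff_eq_add]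

theorem sum_sum_ite_eq_sum_filter_of_disjoint_edges {ι κ V M : Type*} [DecidableEq V]
    [Fintype κ] [AddCommMonoid M] {E : Finset (Sym2 V)}
    (hdisj : ∀ e ∈ E, ∀ f ∈ E, e ≠ f → ∀ v : V, v ∈ e → v ∉ f)
    {g : ι → Sym2 V} (hg : ∀ i, g i ∈ E) {φ : ι → κ → V} (hφ : ∀ i j, φ i j ∈ g i)
    (w : ι → κ → M) (P : Finset ι) {e : Sym2 V} (he : e ∈ E) {v : V} (hv : v ∈ e) :
    ∑ i ∈ P, ∑ j, (if φ i j = v then w i j else 0) =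
      ∑ i ∈ P with g i = e, ∑ j, (if φ i j = v then w i j else 0) := by
  classical
  rw [sum_filter]
  refine sum_congr rfl fun i _ => ?_
  split_ifs with h
  · rfl
  · refine sum_eq_zero fun j _ => if_neg ?_
    rintro rfl
    exact hdisj e he (g i) (hg i) (Ne.symm h) _ hv (hφ i j)

theorem cast_le_div_add_of_two_mul_le {m L E t S : ℕ} (hm : 0 < m) (hL : 2 * L ≤ E + S)
    (hE : m * E ≤ t + m * S) : (L : ℝ) ≤ t / (2 * m) + S := by
  have hm' : (0 : ℝ) < m := by exact_mod_cast hm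
  rw [div_add' _ _ _ (by positivity), le_div_iff₀ (by positivity)]
  have hL' : 2 * (L : ℝ) ≤ E + S := by exact_mod_cast hL
  have hE' : (m : ℝ) * E ≤ t + m * S := by exact_mod_cast hE
  nlinarith

/-- Lemma 5.2. Weights `a i j` with row sums bounded by `S` and total sum
at most `t` can be distributed over the vertices of a nonempty matching `M`, respecting its
edges, so that each vertex receives weight at most `t/(2|M|) + 2S`. -/
theorem stmt8 {V : Type} [DecidableEq V] (s t S : ℕ) (a : Fin s → Fin 2 → ℕ)
    (hsum : (∑ i, ∑ j, a i j) ≤ t) (hS : ∀ i, a i 0 + a i 1 ≤ S)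
    (M : Finset (Sym2 V)) (hM : M.Nonempty)
    (hdiag : ∀ e ∈ M, ¬ e.IsDiag)
    (hdisj : ∀ e ∈ M, ∀ f ∈ M, e ≠ f → ∀ v : V, v ∈ e → v ∉ f) :
    ∃ φ : Fin s → Fin 2 → V,
      (∀ i, s(φ i 0, φ i 1) ∈ M) ∧
      ∀ v : V, (∃ e ∈ M, v ∈ e) →
        ((∑ i, ∑ j, if φ i j = v then a i j else 0 : ℕ) : ℝ)
          ≤ (t : ℝ) / (2 * M.card) + 2 * S := by
  classical
  obtain ⟨g, hgM, hg⟩ :=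
    exists_balanced_assignment S (fun i => a i 0 + a i 1) univ (fun i _ => hS i) M hM
  choose o ho using fun e : Sym2 V =>
    exists_orientation_two_mul_sum_le S a {i | g i = e} (fun i _ => hS i)
  choose p hp using Sym2.exists_fin_two_eq (V := V)
  -- endpoint `p (g i) k` of the edge `g i` receives the entry `a i (k + o (g i) i)`
  refine ⟨fun i j => p (g i) (j - o (g i) i), fun i => ?_, ?_⟩
  · rw [Sym2.mk_apply_sub_fin_two, hp]
    exact hgM i (mem_univ i)
  rintro v ⟨e, he, hv⟩
  obtain ⟨k, rfl⟩ := (Sym2.mem_iff_exists_fin_two (hp e)).mp hv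
  have hinj : Injective (p e) := Sym2.injective_of_mk_eq_of_not_isDiag (hp e) (hdiag e he)
  have hload : ∑ i, ∑ j, (if p (g i) (j - o (g i) i) = p e k then a i j else 0) =
      ∑ i with g i = e, a i (k + o e i) := by
    rw [sum_sum_ite_eq_sum_filter_of_disjoint_edges hdisj (fun i => hgM i (mem_univ i))
      (fun i j => (Sym2.mem_iff_exists_fin_two (hp (g i))).mpr ⟨_, rfl⟩) _ _ he hv]
    refine sum_congr rfl fun i hi => ?_
    rw [(mem_filter.mp hi).2]
    exact sum_ite_apply_sub_eq hinj _ _ _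
  have ht : ∑ i, (a i 0 + a i 1) ≤ t := by simpa only [Fin.sum_univ_two] using hsum
  have hbound := cast_le_div_add_of_two_mul_le (card_pos.mpr hM) (ho e k)
    ((hg e he).trans (Nat.add_le_add_right ht _))
  rw [hload]
  linarith [(S.cast_nonneg : (0 : ℝ) ≤ S)]
end

section
/- Let K ∈ 𝒦ηₙ have partition classes A, B, C and let A' ⊆ A, B' ⊆ B, C' ⊆ C with |A'| ≥ |B'| ≥ |C'|. If |A'| ≤ |B'| + |C'|, then there is a matching in K using only edges among A', B', C' (between distinct classes) that covers at least |A'| + |B'| + |C'| − 4ηn − 1 vertices. -/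
open SimpleGraph

/-!
A maximum matching `M` of `K` on `S = A' ∪ B' ∪ C'` leaves an independent set `U` of `S`
uncovered. If `U` meets two classes, each class contains fewer than `ηn` vertices of `U`, all
non-neighbours of a vertex of `U` in another class. If `U` lies in one class `X`, every vertex of
`S ∖ X` is covered; as `|X| ≤ |S ∖ X|`, counting endpoints gives `|U| ≤ 2m`, where `m` is the
number of edges of `M` avoiding `X`. Finally `m ≤ 2ηn`: otherwise two vertices `u₁ ≠ u₂` of `U`
have neighbours `y`, `z` with `yz ∈ M`, and replacing `yz` by `u₁y`, `u₂z` enlarges `M`.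
-/

open scoped Classical
open Finset

section Matching

variable {V : Type} {G : SimpleGraph V} {M M' : Finset (Sym2 V)} {e : Sym2 V} {u v : V}

lemma MCovers.mono (h : M' ⊆ M) (hv : MCovers M' v) : MCovers M v :=
  let ⟨e, he, hve⟩ := hv; ⟨e, h he, hve⟩

lemma mCovers_insert [DecidableEq V] : MCovers (insert e M) v ↔ v ∈ e ∨ MCovers M v := by
  simp [MCovers]

namespace IsMatching'

lemma subset (hM : IsMatching' G M) (h : M' ⊆ M) : IsMatching' G M' :=
  ⟨fun e he => hM.1 e (h he), fun e he f hf => hM.2 e (h he) f (h hf)⟩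

lemma not_mCovers_erase [DecidableEq V] (hM : IsMatching' G M) (he : e ∈ M) (hv : v ∈ e) :
    ¬MCovers (M.erase e) v := by
  rintro ⟨f, hf, hvf⟩
  exact hM.2 e he f (mem_of_mem_erase hf) (ne_of_mem_erase hf).symm v hv hvf

lemma insert [DecidableEq V] (hM : IsMatching' G M) (huv : G.Adj u v) (hu : ¬MCovers M u)
    (hv : ¬MCovers M v) : IsMatching' G (insert s(u, v) M) := by
  have hfresh : ∀ f ∈ M, ∀ w ∈ s(u, v), w ∉ f := by
    intro f hf w hw hwf
    rcases Sym2.mem_iff.1 hw with rfl | rfl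
    exacts [hu ⟨f, hf, hwf⟩, hv ⟨f, hf, hwf⟩]
  refine ⟨fun f hf => ?_, fun f hf g hg hfg w hwf hwg => ?_⟩
  · rcases mem_insert.1 hf with rfl | hf
    exacts [huv, hM.1 f hf]
  rcases mem_insert.1 hf with rfl | hf <;> rcases mem_insert.1 hg with rfl | hg
  · exact hfg rfl
  · exact hfresh g hg w hwf hwg
  · exact hfresh f hf w hwg hwf
  · exact hM.2 f hf g hg hfg w hwf hwg

lemma card_filter_mCovers [DecidableEq V] (hM : IsMatching' G M) (T : Finset V) :
    #{v ∈ T | MCovers M v} = ∑ e ∈ M, #{v ∈ T | v ∈ e} := by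
  have hunion : {v ∈ T | MCovers M v} = M.biUnion fun e => {v ∈ T | v ∈ e} := by
    ext v
    rw [mem_filter, mem_biUnion]
    simp only [MCovers, mem_filter]
    tauto
  rw [hunion, card_biUnion]
  intro e he f hf hef
  simp only [Function.onFun, Finset.disjoint_left, mem_filter]
  exact fun v hve hvf => hM.2 e he f hf hef v hve.2 hvf.2

lemma card_filter_le_of_exists_mem (hM : IsMatching' G M) (T : Finset V) (p : Sym2 V → Prop)
    [DecidablePred p] (hp : ∀ e ∈ M, p e → ∃ v ∈ e, v ∈ T) : #{e ∈ M | p e} ≤ #T :=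
  calc #{e ∈ M | p e}
      = ∑ e ∈ M, if p e then 1 else 0 := card_filter _ _
    _ ≤ ∑ e ∈ M, #{v ∈ T | v ∈ e} := by
        refine sum_le_sum fun e he => ?_
        split_ifs with h
        · obtain ⟨v, hve, hvT⟩ := hp e he h
          exact card_pos.2 ⟨v, mem_filter.2 ⟨hvT, hve⟩⟩
        · exact Nat.zero_le _
    _ = #{v ∈ T | MCovers M v} := (hM.card_filter_mCovers T).symm
    _ ≤ #T := card_filter_le _ _

end IsMatching'

def IsMatchingOn (G : SimpleGraph V) (S : Finset V) (M : Finset (Sym2 V)) : Prop :=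
  IsMatching' G M ∧ ∀ e ∈ M, ∀ v ∈ e, v ∈ S

def IsMaxMatchingOn (G : SimpleGraph V) (S : Finset V) (M : Finset (Sym2 V)) : Prop :=
  IsMatchingOn G S M ∧ ∀ M', IsMatchingOn G S M' → #M' ≤ #M

lemma exists_isMaxMatchingOn [Fintype V] (G : SimpleGraph V) (S : Finset V) :
    ∃ M, IsMaxMatchingOn G S M := by
  obtain ⟨M, hM, hmax⟩ := exists_max_image {M | IsMatchingOn G S M} card
    ⟨∅, mem_filter.2 ⟨mem_univ _, by simp [IsMatchingOn, IsMatching']⟩⟩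
  exact ⟨M, (mem_filter.1 hM).2, fun M' hM' => hmax M' (mem_filter.2 ⟨mem_univ _, hM'⟩)⟩

namespace IsMaxMatchingOn

variable {S : Finset V}

lemma not_adj (hM : IsMaxMatchingOn G S M) (hu : u ∈ S) (hv : v ∈ S)
    (hcu : ¬MCovers M u) (hcv : ¬MCovers M v) : ¬G.Adj u v := by
  intro huv
  have hsupp : ∀ e ∈ insert s(u, v) M, ∀ w ∈ e, w ∈ S := by
    simp only [mem_insert, forall_eq_or_imp, Sym2.mem_iff, forall_eq_or_imp, forall_eq]
    exact ⟨⟨hu, hv⟩, hM.1.2⟩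
  have hle := hM.2 _ ⟨hM.1.1.insert huv hcu hcv, hsupp⟩
  rw [card_insert_of_notMem fun h => hcu ⟨_, h, Sym2.mem_mk_left u v⟩] at hle
  omega

lemma not_adj_and_adj {y z u₁ u₂ : V} (hM : IsMaxMatchingOn G S M) (he : s(y, z) ∈ M)
    (hu₁ : u₁ ∈ S) (hu₂ : u₂ ∈ S) (hc₁ : ¬MCovers M u₁) (hc₂ : ¬MCovers M u₂)
    (hne : u₁ ≠ u₂) : ¬(G.Adj u₁ y ∧ G.Adj u₂ z) := by
  rintro ⟨h₁, h₂⟩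
  have hyz : y ≠ z := (hM.1.1.1 _ he).ne
  have hcov : ∀ w ∈ s(y, z), MCovers M w := fun w hw => ⟨_, he, hw⟩
  set M₀ := M.erase s(y, z)
  have hM₀ : IsMatching' G M₀ := hM.1.1.subset (erase_subset _ _)
  have hc₀ : ∀ {w}, ¬MCovers M w → ¬MCovers M₀ w := fun hw h => hw (h.mono (erase_subset _ _))
  have hyz₀ : ∀ w ∈ s(y, z), ¬MCovers M₀ w := fun w hw => hM.1.1.not_mCovers_erase he hw
  have hM₁ := hM₀.insert h₁ (hc₀ hc₁) (hyz₀ y (Sym2.mem_mk_left y z))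
  have hu₂₁ : ¬MCovers (insert s(u₁, y) M₀) u₂ := by
    rw [mCovers_insert, Sym2.mem_iff, not_or, not_or]
    exact ⟨⟨hne.symm, fun h => hc₂ (h ▸ hcov y (Sym2.mem_mk_left y z))⟩, hc₀ hc₂⟩
  have hz₁ : ¬MCovers (insert s(u₁, y) M₀) z := by
    rw [mCovers_insert, Sym2.mem_iff, not_or, not_or]
    exact ⟨⟨fun h => hc₁ (h ▸ hcov z (Sym2.mem_mk_right y z)), hyz.symm⟩,
      hyz₀ z (Sym2.mem_mk_right y z)⟩
  have hM₂ := hM₁.insert h₂ hu₂₁ hz₁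
  have hsupp : ∀ e ∈ insert s(u₂, z) (insert s(u₁, y) M₀), ∀ w ∈ e, w ∈ S := by
    simp only [mem_insert, forall_eq_or_imp, Sym2.mem_iff, forall_eq]
    refine ⟨⟨hu₂, hM.1.2 _ he z (Sym2.mem_mk_right y z)⟩,
      ⟨hu₁, hM.1.2 _ he y (Sym2.mem_mk_left y z)⟩,
      fun f hf => hM.1.2 f (mem_of_mem_erase hf)⟩
  have hle := hM.2 _ ⟨hM₂, hsupp⟩
  rw [card_insert_of_notMem fun h => hu₂₁ ⟨_, h, Sym2.mem_mk_left u₂ z⟩,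
    card_insert_of_notMem fun h => hc₀ hc₁ ⟨_, h, Sym2.mem_mk_left u₁ y⟩,
    card_erase_of_mem he] at hle
  have := card_pos.2 ⟨_, he⟩
  omega

end IsMaxMatchingOn

end Matching

lemma card_filter_mem_sym2 {V : Type} [DecidableEq V] {a b : V} (hab : a ≠ b) (T : Finset V) :
    #{v ∈ T | v ∈ s(a, b)} = (if a ∈ T then 1 else 0) + (if b ∈ T then 1 else 0) := by
  have : ({v ∈ T | v ∈ s(a, b)} : Finset V) = {v ∈ ({a, b} : Finset V) | v ∈ T} := by
    ext v
    simp only [mem_filter, Sym2.mem_iff, mem_insert, mem_singleton]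
    tauto
  rw [this, card_filter, sum_pair hab]

lemma Fin.exists_pair_eq_of_ne (i : Fin 3) : ∃ j k : Fin 3, j ≠ i ∧ k ≠ i ∧
    ∀ a b : Fin 3, a ≠ i → b ≠ i → a ≠ b → (a = j ∧ b = k) ∨ (a = k ∧ b = j) := by
  revert i; decide

section Tripartite

variable {n : ℕ} {η : ℝ} {K : SimpleGraph (TriV n)} {S : Finset (TriV n)}
  {M : Finset (Sym2 (TriV n))}

lemma card_filter_fst_ne (n : ℕ) (c : Fin 3) : #{u : TriV n | u.1 ≠ c} = 2 * n := by
  have : ({u : TriV n | u.1 ≠ c} : Finset (TriV n)) = (univ.erase c).sigma fun _ => univ := by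
    ext ⟨i, x⟩
    simp
  rw [this, card_sigma]
  simp

lemma fst_ne_of_adj (hK : K ≤ triK n) {u v : TriV n} (h : K.Adj u v) : u.1 ≠ v.1 := by
  simpa [triK] using hK h

/-- Each edge avoiding class `i` uses two vertices outside it, each other edge one. -/
lemma card_filter_not_mCovers_le_two_mul (hK : K ≤ triK n) (hM : IsMatchingOn K S M)
    {i : Fin 3} (hS : 2 * #{v ∈ S | v.1 = i} ≤ #S)
    (hU : ∀ v ∈ S, ¬MCovers M v → v.1 = i) :
    #{v ∈ S | ¬MCovers M v} ≤ 2 * #{e ∈ M | ∀ v ∈ e, v.1 ≠ i} := by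
  set X : Finset (TriV n) := {v ∈ S | v.1 = i}
  set R : Finset (TriV n) := {v ∈ S | v.1 ≠ i}
  have hXR : #X + #R = #S := card_filter_add_card_filter_not _
  have hUX : #{v ∈ S | ¬MCovers M v} + #{v ∈ X | MCovers M v} = #X := by
    have : ({v ∈ S | ¬MCovers M v} : Finset _) = {v ∈ X | ¬MCovers M v} := by
      rw [filter_filter]
      exact filter_congr fun v hv => ⟨fun h => ⟨hU v hv h, h⟩, And.right⟩
    rw [this, add_comm]
    exact card_filter_add_card_filter_not _
  have hR : #{v ∈ R | MCovers M v} = #R :=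
    congrArg card (filter_true_of_mem fun v hv => by
      by_contra h
      exact (mem_filter.1 hv).2 (hU v (mem_filter.1 hv).1 h))
  have hedge : ∀ e ∈ M, #{v ∈ R | v ∈ e} ≤
      #{v ∈ X | v ∈ e} + 2 * if ∀ v ∈ e, v.1 ≠ i then 1 else 0 := by
    intro e he
    induction e with
    | _ a b =>
    have hab := fst_ne_of_adj hK (hM.1.1 _ he)
    have ha := hM.2 _ he a (Sym2.mem_mk_left a b)
    have hb := hM.2 _ he b (Sym2.mem_mk_right a b)
    rw [card_filter_mem_sym2 (ne_of_apply_ne _ hab), card_filter_mem_sym2 (ne_of_apply_ne _ hab)]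
    simp only [X, R, mem_filter, ha, hb, true_and, Sym2.mem_iff, forall_eq_or_imp, forall_eq]
    split_ifs <;> simp_all
  have hsum := sum_le_sum hedge
  rw [sum_add_distrib, ← mul_sum, ← card_filter] at hsum
  rw [hM.1.card_filter_mCovers] at hUX hR
  omega

namespace KK

lemma card_filter_not_adj_lt (hK : KK n η K) (v : TriV n) {i : Fin 3} (hi : i ≠ v.1) :
    (#{u | u.1 = i ∧ ¬K.Adj v u} : ℝ) < η * n := by
  set N : Finset (TriV n) := {u | K.Adj v u}
  set D : Finset (TriV n) := {u | u.1 = i ∧ ¬K.Adj v u}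
  have hdeg : (2 - η) * n < #N := by
    have hN : ({u | K.Adj v u} : Set (TriV n)) = ↑N := by ext; simp [N]
    simpa [hN, Set.ncard_coe_finset] using hK.2 v
  have hND : #N + #D ≤ 2 * n := by
    rw [← card_union_of_disjoint, ← card_filter_fst_ne n v.1]
    · refine card_le_card fun u hu => ?_
      simp only [N, D, mem_union, mem_filter, mem_univ, true_and] at hu ⊢
      rcases hu with hu | ⟨rfl, -⟩
      exacts [(fst_ne_of_adj hK.1 hu).symm, hi]
    · exact disjoint_filter.2 fun u _ hN hD => hD.2 hN
  have : ((#N + #D : ℕ) : ℝ) ≤ ((2 * n : ℕ) : ℝ) := by exact_mod_cast hND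
  push_cast at this
  linarith

lemma eta_mul_nonneg (hK : KK n η K) : 0 ≤ η * n := by
  rcases Nat.eq_zero_or_pos n with rfl | hn
  · simp
  · exact (Nat.cast_nonneg _).trans_lt
      (hK.card_filter_not_adj_lt ⟨0, ⟨0, hn⟩⟩ (i := 1) Fin.zero_ne_one.symm) |>.le

lemma card_lt_of_forall_not_adj (hK : KK n η K) {U : Finset (TriV n)}
    (hU : ∀ u ∈ U, ∀ v ∈ U, ¬K.Adj u v) {u v : TriV n} (hu : u ∈ U) (hv : v ∈ U)
    (huv : u.1 ≠ v.1) : (#U : ℝ) < 3 * (η * n) := by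
  have hclass : ∀ i : Fin 3, (#{x ∈ U | x.1 = i} : ℝ) < η * n := by
    intro i
    obtain ⟨w, hw, hwi⟩ : ∃ w ∈ U, i ≠ w.1 := by
      by_cases h : i = u.1
      · exact ⟨v, hv, h ▸ huv⟩
      · exact ⟨u, hu, h⟩
    refine lt_of_le_of_lt ?_ (hK.card_filter_not_adj_lt w hwi)
    exact_mod_cast card_le_card fun x hx => by
      simp only [mem_filter, mem_univ, true_and] at hx ⊢
      exact ⟨hx.2, hU w hw x hx.1⟩
  have hsum : #U = ∑ i : Fin 3, #{x ∈ U | x.1 = i} :=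
    card_eq_sum_card_fiberwise fun x _ => mem_coe.2 (mem_univ x.1)
  rw [hsum, Fin.sum_univ_three]
  push_cast
  linarith [hclass 0, hclass 1, hclass 2]

/-- Fewer than `ηn` of these edges have their endpoint in one other class non-adjacent to `u₁`,
fewer than `ηn` their endpoint in the third class non-adjacent to `u₂`; any remaining edge `yz`
closes an augmenting path `u₁ y z u₂`. -/
lemma card_filter_forall_fst_ne_le (hK : KK n η K) (hM : IsMaxMatchingOn K S M)
    {u₁ u₂ : TriV n} (hu₁ : u₁ ∈ S) (hu₂ : u₂ ∈ S) (hc₁ : ¬MCovers M u₁)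
    (hc₂ : ¬MCovers M u₂) (hne : u₁ ≠ u₂) {i : Fin 3} (hi₁ : u₁.1 = i) (hi₂ : u₂.1 = i) :
    (#{e ∈ M | ∀ v ∈ e, v.1 ≠ i} : ℝ) ≤ 2 * (η * n) := by
  obtain ⟨j, k, hj, hk, hjk⟩ := Fin.exists_pair_eq_of_ne i
  set bad₁ := M.filter fun e => ∃ v ∈ e, v.1 = j ∧ ¬K.Adj u₁ v
  set bad₂ := M.filter fun e => ∃ v ∈ e, v.1 = k ∧ ¬K.Adj u₂ v
  have hbad₁ : (#bad₁ : ℝ) < η * n :=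
    lt_of_le_of_lt (Nat.cast_le.2 (hM.1.1.card_filter_le_of_exists_mem _ _
      fun e _ ⟨v, hve, hv⟩ => ⟨v, hve, by simpa using hv⟩))
      (hK.card_filter_not_adj_lt u₁ (by rwa [hi₁]))
  have hbad₂ : (#bad₂ : ℝ) < η * n :=
    lt_of_le_of_lt (Nat.cast_le.2 (hM.1.1.card_filter_le_of_exists_mem _ _
      fun e _ ⟨v, hve, hv⟩ => ⟨v, hve, by simpa using hv⟩))
      (hK.card_filter_not_adj_lt u₂ (by rwa [hi₂]))
  have hgood : ∀ y z, s(y, z) ∈ M → y.1 = j → z.1 = k → s(y, z) ∈ bad₁ ∪ bad₂ := by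
    intro y z he hy hz
    by_contra hnot
    simp only [bad₁, bad₂, mem_union, mem_filter, Sym2.mem_iff, not_or, not_and,
      exists_eq_or_imp, exists_eq_left, not_not] at hnot
    exact hM.not_adj_and_adj he hu₁ hu₂ hc₁ hc₂ hne
      ⟨(hnot.1 he).1 hy, (hnot.2 he).2 hz⟩
  by_contra! hlt
  have hcard : #(bad₁ ∪ bad₂) < #{e ∈ M | ∀ v ∈ e, v.1 ≠ i} := by
    have : (#(bad₁ ∪ bad₂) : ℝ) ≤ #bad₁ + #bad₂ := by exact_mod_cast card_union_le bad₁ bad₂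
    exact_mod_cast (by linarith : (#(bad₁ ∪ bad₂) : ℝ) < #{e ∈ M | ∀ v ∈ e, v.1 ≠ i})
  obtain ⟨e, he, hnot⟩ := exists_mem_notMem_of_card_lt_card hcard
  induction e with
  | _ a b =>
  obtain ⟨heM, hei⟩ := mem_filter.1 he
  have hab := fst_ne_of_adj hK.1 (hM.1.1.1 _ heM)
  rcases hjk a.1 b.1 (hei a (Sym2.mem_mk_left a b)) (hei b (Sym2.mem_mk_right a b)) hab
    with ⟨ha, hb⟩ | ⟨ha, hb⟩
  · exact hnot (hgood a b heM ha hb)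
  · rw [Sym2.eq_swap] at heM hnot
    exact hnot (hgood b a heM hb ha)

theorem card_filter_not_mCovers_le (hK : KK n η K) (hM : IsMaxMatchingOn K S M)
    (hS : ∀ i, 2 * #{v ∈ S | v.1 = i} ≤ #S) :
    (#{v ∈ S | ¬MCovers M v} : ℝ) ≤ 4 * (η * n) + 1 := by
  set U : Finset (TriV n) := {v ∈ S | ¬MCovers M v}
  have hmemU : ∀ {u}, u ∈ U ↔ u ∈ S ∧ ¬MCovers M u := mem_filter
  have hη := hK.eta_mul_nonneg
  by_cases htwo : ∃ u ∈ U, ∃ v ∈ U, u.1 ≠ v.1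
  · obtain ⟨u, hu, v, hv, huv⟩ := htwo
    have hind : ∀ u ∈ U, ∀ v ∈ U, ¬K.Adj u v := fun u hu v hv =>
      hM.not_adj (hmemU.1 hu).1 (hmemU.1 hv).1 (hmemU.1 hu).2 (hmemU.1 hv).2
    linarith [hK.card_lt_of_forall_not_adj hind hu hv huv]
  push Not at htwo
  rcases le_or_gt #U 1 with hle | hlt
  · have : (#U : ℝ) ≤ 1 := by exact_mod_cast hle
    linarith
  obtain ⟨u₁, hu₁, u₂, hu₂, hne⟩ := one_lt_card.1 hlt
  have hcount := card_filter_not_mCovers_le_two_mul hK.1 hM.1 (hS u₁.1)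
    fun v hv hcv => htwo v (hmemU.2 ⟨hv, hcv⟩) u₁ hu₁
  have hswap := hK.card_filter_forall_fst_ne_le hM (hmemU.1 hu₁).1 (hmemU.1 hu₂).1
    (hmemU.1 hu₁).2 (hmemU.1 hu₂).2 hne rfl (htwo u₂ hu₂ u₁ hu₁)
  have : (#U : ℝ) ≤ 2 * #{e ∈ M | ∀ v ∈ e, v.1 ≠ u₁.1} := by exact_mod_cast hcount
  linarith

end KK

end Tripartite

/-- Proposition 6.2. Almost perfect matchings in subsets of the three
partition classes of a graph from `𝒦ηₙ`. -/
theorem stmt13 (n : ℕ) (η : ℝ) (K : SimpleGraph (TriV n)) (hK : KK n η K)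
    (A' B' C' : Finset (TriV n))
    (hA : ∀ v ∈ A', v.1 = 0) (hB : ∀ v ∈ B', v.1 = 1) (hC : ∀ v ∈ C', v.1 = 2)
    (h1 : B'.card ≤ A'.card) (h2 : C'.card ≤ B'.card)
    (h3 : A'.card ≤ B'.card + C'.card) :
    ∃ M : Finset (Sym2 (TriV n)),
      IsMatching' K M ∧
      (∀ e ∈ M, ∀ v : TriV n, v ∈ e → v ∈ A' ∪ B' ∪ C') ∧
      (A'.card : ℝ) + B'.card + C'.card - 4 * η * n - 1
        ≤ (({v | MCovers M v} : Set (TriV n)).ncard : ℝ) := by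
  set S := A' ∪ B' ∪ C'
  have hclass : ∀ i, ({v ∈ S | v.1 = i} : Finset _) = ![A', B', C'] i := by
    intro i
    fin_cases i <;> ext v <;> simp [S] <;> grind
  have hS : #S = #A' + #B' + #C' := by
    rw [card_eq_sum_card_fiberwise fun v _ => mem_coe.2 (mem_univ v.1), Fin.sum_univ_three]
    simp [hclass, add_assoc]
  obtain ⟨M, hM⟩ := exists_isMaxMatchingOn K S
  refine ⟨M, hM.1.1, hM.1.2, ?_⟩
  have hU := hK.card_filter_not_mCovers_le hM fun i => by
    rw [hclass, hS]
    fin_cases i <;> simp <;> omega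
  have hcov : {v | MCovers M v} = (({v ∈ S | MCovers M v} : Finset _) : Set (TriV n)) := by
    ext v
    rw [mem_coe, mem_filter]
    exact ⟨fun ⟨e, he, hve⟩ => ⟨hM.1.2 e he v hve, e, he, hve⟩, And.right⟩
  have hsplit : ((#{v ∈ S | MCovers M v} + #{v ∈ S | ¬MCovers M v} : ℕ) : ℝ) = #S :=
    congrArg _ (card_filter_add_card_filter_not _)
  rw [hcov, Set.ncard_coe_finset]
  push_cast [hS] at hsplit
  linarith
end
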